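/- For ρ ∈ [0, 1/2], the maximum of ∫_{[0,1]^2} max(u_1, u_2) dC(u) over all copulas C with d_c(M, C) ≤ ρ equals (1+ρ)/2, where M is the comonotone copula and c(u,v)=|u_1-v_1|+|u_2-v_2|. For ρ > 1/2 the maximum equals 3/4. -/

import Mathlib

open MeasureTheory Set
open scoped ENNReal

/-- The uniform distribution on `[0,1]`. -/
noncomputable def unif : Measure ℝ := volume.restrict (Set.Icc (0:ℝ) 1)

/-- The comonotone copula: the law of `(U,U)` for `U` uniform on `[0,1]`. -/
noncomputable def Mcop : Measure (ℝ × ℝ) := unif.map (fun u => (u, u))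

/-- The countermonotone copula: the law of `(U,1-U)` for `U` uniform on `[0,1]`. -/
noncomputable def Wcop : Measure (ℝ × ℝ) := unif.map (fun u => (u, 1 - u))

/-- Optimal transport cost between measures on `[0,1]²` with cost
`c(u,v) = |u₁-v₁| + |u₂-v₂|` (Wasserstein-1 w.r.t. the `L¹`-metric). -/
noncomputable def transportCost (μ ν : Measure (ℝ × ℝ)) : ℝ≥0∞ :=
  ⨅ (π : Measure ((ℝ × ℝ) × (ℝ × ℝ)))
    (_ : π.map Prod.fst = μ) (_ : π.map Prod.snd = ν),
    ∫⁻ q, ENNReal.ofReal (|q.1.1 - q.2.1| + |q.1.2 - q.2.2|) ∂π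

/-- A (bivariate) copula: a probability measure on `[0,1]²` with uniform marginals. -/
def IsCopula (C : Measure (ℝ × ℝ)) : Prop :=
  IsProbabilityMeasure C ∧ C.map Prod.fst = unif ∧ C.map Prod.snd = unif

/-!
Since `max a b = (a + b + |a - b|) / 2` and both marginals of a copula `C` have mean `1/2`,
`∫ max u₁ u₂ dC = 1/2 + (∫ |u₁ - u₂| dC) / 2`. The function `|u₁ - u₂|` is `1`-Lipschitz for the
cost `c` and vanishes on the support of `M`, so `∫ |u₁ - u₂| dC ≤ d_c(M, C)`; and
`|u₁ - u₂| ≤ |u₁ - 1/2| + |u₂ - 1/2|` gives `∫ |u₁ - u₂| dC ≤ 1/2` for every copula. Both bounds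
are attained by the mixtures `(1 - t) M + t W` with the countermonotone copula `W`: moving the
`W`-part of the mass vertically shows that their distance from `M` is at most `t / 2`.
-/

section ConvexCombination

variable {α β : Type*} [MeasurableSpace α] [MeasurableSpace β]

noncomputable def convexComb (t : ℝ) (μ ν : Measure α) : Measure α :=
  ENNReal.ofReal (1 - t) • μ + ENNReal.ofReal t • ν

lemma ofReal_one_sub_add_ofReal {t : ℝ} (ht₀ : 0 ≤ t) (ht₁ : t ≤ 1) :
    ENNReal.ofReal (1 - t) + ENNReal.ofReal t = 1 := by
  rw [← ENNReal.ofReal_add (by linarith) ht₀, sub_add_cancel, ENNReal.ofReal_one]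

lemma convexComb_self {t : ℝ} (ht₀ : 0 ≤ t) (ht₁ : t ≤ 1) (μ : Measure α) :
    convexComb t μ μ = μ := by
  rw [convexComb, ← add_smul, ofReal_one_sub_add_ofReal ht₀ ht₁, one_smul]

lemma map_convexComb {f : α → β} (hf : Measurable f) (t : ℝ) (μ ν : Measure α) :
    (convexComb t μ ν).map f = convexComb t (μ.map f) (ν.map f) := by
  rw [convexComb, Measure.map_add _ _ hf, Measure.map_smul, Measure.map_smul, convexComb]

lemma isProbabilityMeasure_convexComb {t : ℝ} (ht₀ : 0 ≤ t) (ht₁ : t ≤ 1) (μ ν : Measure α)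
    [IsProbabilityMeasure μ] [IsProbabilityMeasure ν] :
    IsProbabilityMeasure (convexComb t μ ν) := by
  constructor
  simp only [convexComb, Measure.coe_add, Measure.coe_smul, Pi.add_apply, Pi.smul_apply,
    measure_univ, smul_eq_mul, mul_one]
  exact ofReal_one_sub_add_ofReal ht₀ ht₁

lemma lintegral_convexComb (f : α → ℝ≥0∞) (t : ℝ) (μ ν : Measure α) :
    ∫⁻ x, f x ∂convexComb t μ ν =
      ENNReal.ofReal (1 - t) * ∫⁻ x, f x ∂μ + ENNReal.ofReal t * ∫⁻ x, f x ∂ν := by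
  rw [convexComb, lintegral_add_measure, lintegral_smul_measure, lintegral_smul_measure,
    smul_eq_mul, smul_eq_mul]

lemma integral_convexComb {t : ℝ} (ht₀ : 0 ≤ t) (ht₁ : t ≤ 1) {μ ν : Measure α} {f : α → ℝ}
    (hμ : Integrable f μ) (hν : Integrable f ν) :
    ∫ x, f x ∂convexComb t μ ν = (1 - t) * ∫ x, f x ∂μ + t * ∫ x, f x ∂ν := by
  rw [convexComb, integral_add_measure (hμ.smul_measure ENNReal.ofReal_ne_top)
      (hν.smul_measure ENNReal.ofReal_ne_top), integral_smul_measure, integral_smul_measure,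
    ENNReal.toReal_ofReal (by linarith), ENNReal.toReal_ofReal ht₀, smul_eq_mul, smul_eq_mul]

end ConvexCombination

lemma transportCost_le_lintegral {μ ν : Measure (ℝ × ℝ)} (π : Measure ((ℝ × ℝ) × (ℝ × ℝ)))
    (hμ : π.map Prod.fst = μ) (hν : π.map Prod.snd = ν) :
    transportCost μ ν ≤ ∫⁻ q, ENNReal.ofReal (|q.1.1 - q.2.1| + |q.1.2 - q.2.2|) ∂π :=
  iInf_le_of_le π <| iInf_le_of_le hμ <| iInf_le _ hν

lemma transportCost_convexComb_le {μ₁ μ₂ ν₁ ν₂ : Measure (ℝ × ℝ)}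
    {π₁ π₂ : Measure ((ℝ × ℝ) × (ℝ × ℝ))}
    (hμ₁ : π₁.map Prod.fst = μ₁) (hν₁ : π₁.map Prod.snd = ν₁)
    (hμ₂ : π₂.map Prod.fst = μ₂) (hν₂ : π₂.map Prod.snd = ν₂) (t : ℝ) :
    transportCost (convexComb t μ₁ μ₂) (convexComb t ν₁ ν₂) ≤
      ENNReal.ofReal (1 - t) * ∫⁻ q, ENNReal.ofReal (|q.1.1 - q.2.1| + |q.1.2 - q.2.2|) ∂π₁ +
      ENNReal.ofReal t * ∫⁻ q, ENNReal.ofReal (|q.1.1 - q.2.1| + |q.1.2 - q.2.2|) ∂π₂ := by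
  rw [← lintegral_convexComb]
  refine transportCost_le_lintegral _ ?_ ?_
  · rw [map_convexComb measurable_fst, hμ₁, hμ₂]
  · rw [map_convexComb measurable_snd, hν₁, hν₂]

lemma lintegral_le_lintegral_add_transportCost {μ ν : Measure (ℝ × ℝ)} {f : ℝ × ℝ → ℝ}
    (hf : Measurable f) (hlip : ∀ x y : ℝ × ℝ, f y ≤ f x + (|x.1 - y.1| + |x.2 - y.2|)) :
    ∫⁻ y, ENNReal.ofReal (f y) ∂ν ≤ ∫⁻ x, ENNReal.ofReal (f x) ∂μ + transportCost μ ν := by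
  simp only [transportCost, ENNReal.add_iInf]
  refine le_iInf fun π => le_iInf fun hμ => le_iInf fun hν => ?_
  rw [← hμ, ← hν, lintegral_map hf.ennreal_ofReal measurable_fst,
    lintegral_map hf.ennreal_ofReal measurable_snd,
    ← lintegral_add_left (f := fun q : (ℝ × ℝ) × (ℝ × ℝ) => ENNReal.ofReal (f q.1))
      (hf.comp measurable_fst).ennreal_ofReal]
  exact lintegral_mono fun q =>
    (ENNReal.ofReal_le_ofReal (hlip q.1 q.2)).trans ENNReal.ofReal_add_le

instance : IsProbabilityMeasure unif :=
  ⟨by simp [unif, Real.volume_Icc]⟩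

lemma integrable_unif_of_continuous {f : ℝ → ℝ} (hf : Continuous f) : Integrable f unif :=
  hf.integrableOn_Icc

lemma integral_unif_eq_intervalIntegral (f : ℝ → ℝ) : ∫ x, f x ∂unif = ∫ x in (0:ℝ)..1, f x := by
  rw [unif, integral_Icc_eq_integral_Ioc, intervalIntegral.integral_of_le zero_le_one]

lemma unif_map_one_sub : unif.map (fun x => 1 - x) = unif := by
  have hmp : MeasurePreserving (fun x : ℝ => 1 - x) volume volume :=
    Measure.measurePreserving_sub_left volume 1
  have hpre : (fun x : ℝ => 1 - x) ⁻¹' Icc 0 1 = Icc 0 1 := by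
    ext x; simp only [mem_preimage, mem_Icc]; constructor <;> intro h <;> constructor <;> linarith
  conv_lhs => rw [unif, ← hpre]
  rw [← Measure.restrict_map hmp.measurable measurableSet_Icc, hmp.map_eq, unif]

lemma integral_unif_id : ∫ x, x ∂unif = 1 / 2 := by
  rw [integral_unif_eq_intervalIntegral, integral_id]
  norm_num

lemma integral_unif_abs_sub_half : ∫ x, |x - 1 / 2| ∂unif = 1 / 4 := by
  have hc : Continuous fun x : ℝ => |x - 1 / 2| := by fun_prop
  have hleft : ∫ x in (0:ℝ)..1 / 2, |x - 1 / 2| = ∫ x in (0:ℝ)..1 / 2, (1 / 2 - x) :=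
    intervalIntegral.integral_congr fun x hx => by
      rw [uIcc_of_le (by norm_num)] at hx
      rw [abs_of_nonpos (by linarith [hx.2]), neg_sub]
  have hright : ∫ x in (1 / 2 : ℝ)..1, |x - 1 / 2| = ∫ x in (1 / 2 : ℝ)..1, (x - 1 / 2) :=
    intervalIntegral.integral_congr fun x hx => by
      rw [uIcc_of_le (by norm_num)] at hx
      rw [abs_of_nonneg (by linarith [hx.1])]
  rw [integral_unif_eq_intervalIntegral, ← intervalIntegral.integral_add_adjacent_intervals
    (hc.intervalIntegrable 0 (1 / 2)) (hc.intervalIntegrable (1 / 2) 1), hleft, hright,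
    intervalIntegral.integral_sub intervalIntegrable_const intervalIntegral.intervalIntegrable_id,
    intervalIntegral.integral_sub intervalIntegral.intervalIntegrable_id intervalIntegrable_const]
  norm_num [integral_id]

section Copula

lemma isCopula_map_prodMk {f g : ℝ → ℝ} (hf : Measurable f) (hg : Measurable g)
    (hfu : unif.map f = unif) (hgu : unif.map g = unif) :
    IsCopula (unif.map fun u => (f u, g u)) :=
  ⟨Measure.isProbabilityMeasure_map (hf.prodMk hg).aemeasurable,
    by rw [Measure.map_map measurable_fst (hf.prodMk hg)]; exact hfu,
    by rw [Measure.map_map measurable_snd (hf.prodMk hg)]; exact hgu⟩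

lemma isCopula_Mcop : IsCopula Mcop :=
  isCopula_map_prodMk measurable_id measurable_id Measure.map_id Measure.map_id

lemma isCopula_Wcop : IsCopula Wcop :=
  isCopula_map_prodMk measurable_id (by fun_prop) Measure.map_id unif_map_one_sub

lemma IsCopula.convexComb {C D : Measure (ℝ × ℝ)} (hC : IsCopula C) (hD : IsCopula D) {t : ℝ}
    (ht₀ : 0 ≤ t) (ht₁ : t ≤ 1) : IsCopula (convexComb t C D) := by
  have := hC.1
  have := hD.1
  refine ⟨isProbabilityMeasure_convexComb ht₀ ht₁ C D, ?_, ?_⟩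
  · rw [map_convexComb measurable_fst, hC.2.1, hD.2.1, convexComb_self ht₀ ht₁]
  · rw [map_convexComb measurable_snd, hC.2.2, hD.2.2, convexComb_self ht₀ ht₁]

variable {C : Measure (ℝ × ℝ)}

lemma IsCopula.ae_mem_unitSquare (hC : IsCopula C) :
    ∀ᵐ u ∂C, u ∈ Icc (0:ℝ) 1 ×ˢ Icc (0:ℝ) 1 := by
  have hunif : ∀ᵐ x ∂unif, x ∈ Icc (0:ℝ) 1 := ae_restrict_mem measurableSet_Icc
  have h₁ := ae_of_ae_map measurable_fst.aemeasurable (hC.2.1 ▸ hunif)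
  have h₂ := ae_of_ae_map measurable_snd.aemeasurable (hC.2.2 ▸ hunif)
  filter_upwards [h₁, h₂] with u hu₁ hu₂ using ⟨hu₁, hu₂⟩

lemma IsCopula.integrable_of_continuous (hC : IsCopula C) {f : ℝ × ℝ → ℝ} (hf : Continuous f) :
    Integrable f C := by
  have := hC.1
  rw [← Measure.restrict_eq_self_of_ae_mem hC.ae_mem_unitSquare]
  exact hf.continuousOn.integrableOn_compact (isCompact_Icc.prod isCompact_Icc)

lemma IsCopula.integral_comp_fst (hC : IsCopula C) {g : ℝ → ℝ} (hg : Measurable g) :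
    ∫ u, g u.1 ∂C = ∫ x, g x ∂unif := by
  rw [← hC.2.1, integral_map measurable_fst.aemeasurable hg.aestronglyMeasurable]

lemma IsCopula.integral_comp_snd (hC : IsCopula C) {g : ℝ → ℝ} (hg : Measurable g) :
    ∫ u, g u.2 ∂C = ∫ x, g x ∂unif := by
  rw [← hC.2.2, integral_map measurable_snd.aemeasurable hg.aestronglyMeasurable]

lemma IsCopula.integral_max_eq (hC : IsCopula C) :
    ∫ u, max u.1 u.2 ∂C = 1 / 2 + (∫ u, |u.1 - u.2| ∂C) / 2 := by
  have hmax : ∀ u : ℝ × ℝ, max u.1 u.2 = (u.1 + (u.2 + |u.1 - u.2|)) / 2 := fun u => by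
    rcases le_total u.1 u.2 with h | h
    · rw [max_eq_right h, abs_of_nonpos (by linarith)]; ring
    · rw [max_eq_left h, abs_of_nonneg (by linarith)]; ring
  simp only [hmax]
  rw [integral_div, integral_add (hC.integrable_of_continuous (by fun_prop))
      (hC.integrable_of_continuous (by fun_prop)),
    integral_add (hC.integrable_of_continuous (by fun_prop))
      (hC.integrable_of_continuous (by fun_prop)),
    hC.integral_comp_fst (g := fun x => x) measurable_id,
    hC.integral_comp_snd (g := fun x => x) measurable_id, integral_unif_id]
  ring

lemma IsCopula.integral_abs_sub_le_half (hC : IsCopula C) : ∫ u, |u.1 - u.2| ∂C ≤ 1 / 2 := by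
  have hsplit : ∀ u : ℝ × ℝ, |u.1 - u.2| ≤ |u.1 - 1 / 2| + |u.2 - 1 / 2| := fun u => by
    rw [abs_sub_comm u.2]
    exact abs_sub_le u.1 (1 / 2) u.2
  calc ∫ u, |u.1 - u.2| ∂C ≤ ∫ u, (|u.1 - 1 / 2| + |u.2 - 1 / 2|) ∂C :=
        integral_mono (hC.integrable_of_continuous (by fun_prop))
          (hC.integrable_of_continuous (by fun_prop)) hsplit
    _ = 1 / 2 := by
        rw [integral_add (hC.integrable_of_continuous (by fun_prop))
            (hC.integrable_of_continuous (by fun_prop)),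
          hC.integral_comp_fst (g := fun x => |x - 1 / 2|) (by fun_prop),
          hC.integral_comp_snd (g := fun x => |x - 1 / 2|) (by fun_prop),
          integral_unif_abs_sub_half]
        norm_num

lemma IsCopula.ofReal_integral_abs_sub_le_transportCost (hC : IsCopula C) :
    ENNReal.ofReal (∫ u, |u.1 - u.2| ∂C) ≤ transportCost Mcop C := by
  have hlip : ∀ x y : ℝ × ℝ, |y.1 - y.2| ≤ |x.1 - x.2| + (|x.1 - y.1| + |x.2 - y.2|) :=
    fun x y => by
      have := abs_sub_le y.1 x.1 y.2
      have := abs_sub_le x.1 x.2 y.2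
      rw [abs_sub_comm y.1 x.1, abs_sub_comm x.2 y.2] at *
      linarith
  have hM : ∫⁻ x, ENNReal.ofReal |x.1 - x.2| ∂Mcop = 0 := by
    rw [Mcop, lintegral_map (by fun_prop) (by fun_prop)]
    simp
  rw [ofReal_integral_eq_lintegral_ofReal (hC.integrable_of_continuous (by fun_prop))
    (Filter.Eventually.of_forall fun _ => abs_nonneg _)]
  simpa [hM] using lintegral_le_lintegral_add_transportCost (μ := Mcop) (by fun_prop) hlip

lemma IsCopula.integral_max_le_of_transportCost_le (hC : IsCopula C)
    {ρ : ℝ} (hρ : 0 ≤ ρ) (hcost : transportCost Mcop C ≤ ENNReal.ofReal ρ) :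
    ∫ u, max u.1 u.2 ∂C ≤ (1 + ρ) / 2 := by
  have hD : ∫ u, |u.1 - u.2| ∂C ≤ ρ :=
    (ENNReal.ofReal_le_ofReal_iff hρ).mp (hC.ofReal_integral_abs_sub_le_transportCost.trans hcost)
  rw [hC.integral_max_eq]
  linarith

lemma IsCopula.integral_max_le (hC : IsCopula C) :
    ∫ u, max u.1 u.2 ∂C ≤ 3 / 4 := by
  rw [hC.integral_max_eq]
  linarith [hC.integral_abs_sub_le_half]

end Copula

lemma integral_unif_abs_sub_one_sub : ∫ x, |x - (1 - x)| ∂unif = 1 / 2 := by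
  have h : ∀ x : ℝ, |x - (1 - x)| = 2 * |x - 1 / 2| := fun x => by
    rw [← abs_two, ← abs_mul, abs_two]; ring_nf
  simp only [h]
  rw [integral_const_mul, integral_unif_abs_sub_half]
  norm_num

lemma integral_abs_sub_Mcop : ∫ u, |u.1 - u.2| ∂Mcop = 0 := by
  rw [Mcop, integral_map (by fun_prop) (by fun_prop)]
  simp

lemma integral_abs_sub_Wcop : ∫ u, |u.1 - u.2| ∂Wcop = 1 / 2 := by
  rw [Wcop, integral_map (by fun_prop) (by fun_prop), integral_unif_abs_sub_one_sub]

lemma transportCost_Mcop_convexComb_Wcop_le {t : ℝ} (ht₀ : 0 ≤ t) (ht₁ : t ≤ 1) :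
    transportCost Mcop (convexComb t Mcop Wcop) ≤ ENNReal.ofReal (t / 2) := by
  let πM : Measure ((ℝ × ℝ) × (ℝ × ℝ)) := unif.map fun u => ((u, u), (u, u))
  let πW : Measure ((ℝ × ℝ) × (ℝ × ℝ)) := unif.map fun u => ((u, u), (u, 1 - u))
  have hMM : ∫⁻ q, ENNReal.ofReal (|q.1.1 - q.2.1| + |q.1.2 - q.2.2|) ∂πM = 0 := by
    rw [lintegral_map (by fun_prop) (by fun_prop)]
    simp
  have hMW : ∫⁻ q, ENNReal.ofReal (|q.1.1 - q.2.1| + |q.1.2 - q.2.2|) ∂πW =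
      ENNReal.ofReal (1 / 2) := by
    rw [lintegral_map (by fun_prop) (by fun_prop), ← integral_unif_abs_sub_one_sub,
      ofReal_integral_eq_lintegral_ofReal (integrable_unif_of_continuous (by fun_prop))
        (Filter.Eventually.of_forall fun _ => abs_nonneg _)]
    simp
  calc transportCost Mcop (convexComb t Mcop Wcop)
      = transportCost (convexComb t Mcop Mcop) (convexComb t Mcop Wcop) := by
        rw [convexComb_self ht₀ ht₁]
    _ ≤ ENNReal.ofReal (1 - t) * 0 + ENNReal.ofReal t * ENNReal.ofReal (1 / 2) := by
        rw [← hMM, ← hMW]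
        refine transportCost_convexComb_le ?_ ?_ ?_ ?_ t <;>
          rw [Measure.map_map (by fun_prop) (by fun_prop)] <;> rfl
    _ = ENNReal.ofReal (t / 2) := by
        rw [mul_zero, zero_add, ← ENNReal.ofReal_mul ht₀, mul_one_div]

lemma integral_max_convexComb_Mcop_Wcop {t : ℝ} (ht₀ : 0 ≤ t) (ht₁ : t ≤ 1) :
    ∫ u, max u.1 u.2 ∂convexComb t Mcop Wcop = 1 / 2 + t / 4 := by
  rw [(isCopula_Mcop.convexComb isCopula_Wcop ht₀ ht₁).integral_max_eq,
    integral_convexComb ht₀ ht₁ (isCopula_Mcop.integrable_of_continuous (by fun_prop))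
      (isCopula_Wcop.integrable_of_continuous (by fun_prop)),
    integral_abs_sub_Mcop, integral_abs_sub_Wcop]
  ring

/-- For `ρ ∈ [0,1/2]`, the maximum of `∫ max(u₁,u₂) dC` over copulas `C`
with `d_c(M,C) ≤ ρ` equals `(1+ρ)/2`; for `ρ > 1/2` it equals `3/4`. -/
theorem max_expected_max_over_wasserstein_ball (ρ : ℝ) :
    (ρ ∈ Set.Icc (0:ℝ) (1/2) →
      IsGreatest {r : ℝ | ∃ C : Measure (ℝ × ℝ), IsCopula C ∧
        transportCost Mcop C ≤ ENNReal.ofReal ρ ∧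
        r = ∫ u, max u.1 u.2 ∂C} ((1 + ρ) / 2)) ∧
    (1/2 < ρ →
      IsGreatest {r : ℝ | ∃ C : Measure (ℝ × ℝ), IsCopula C ∧
        transportCost Mcop C ≤ ENNReal.ofReal ρ ∧
        r = ∫ u, max u.1 u.2 ∂C} (3 / 4)) := by
  refine ⟨fun ⟨hρ₀, hρ₁⟩ => ⟨?_, ?_⟩, fun hρ => ⟨?_, ?_⟩⟩
  · have ht₀ : 0 ≤ 2 * ρ := by linarith
    have ht₁ : 2 * ρ ≤ 1 := by linarith
    refine ⟨convexComb (2 * ρ) Mcop Wcop, isCopula_Mcop.convexComb isCopula_Wcop ht₀ ht₁, ?_, ?_⟩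
    · simpa using transportCost_Mcop_convexComb_Wcop_le ht₀ ht₁
    · rw [integral_max_convexComb_Mcop_Wcop ht₀ ht₁]
      ring
  · rintro _ ⟨C, hC, hcost, rfl⟩
    exact hC.integral_max_le_of_transportCost_le hρ₀ hcost
  · refine ⟨convexComb 1 Mcop Wcop, isCopula_Mcop.convexComb isCopula_Wcop zero_le_one le_rfl,
      ?_, ?_⟩
    · exact (transportCost_Mcop_convexComb_Wcop_le zero_le_one le_rfl).trans
        (ENNReal.ofReal_le_ofReal (by linarith))
    · rw [integral_max_convexComb_Mcop_Wcop zero_le_one le_rfl]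
      norm_num
  · rintro _ ⟨C, hC, -, rfl⟩
    exact hC.integral_max_le
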